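/- arXiv:2105.04240 — 2 statements merged into one kernel-verified Lean document; each statement's English description precedes it below -/
import Mathlib

section
/- Let A₁, …, A_k be n×n real symmetric positive semidefinite matrices with A₁ + ⋯ + A_k = Iₙ and rank(A₁) + ⋯ + rank(A_k) = n. Then each A_i is idempotent and A_iA_j = 0 for i ≠ j. -/
/-!
Since `1 - Aᵢ = ∑_{j ≠ i} Aⱼ`, subadditivity of rank gives `rank Aᵢ + rank (1 - Aᵢ) ≤ n`. The
ranges of `Aᵢ` and `1 - Aᵢ` span the whole space, so they are then independent; as
`Aᵢ - Aᵢ²` maps into both, `Aᵢ` is idempotent. For orthogonality, `∑_{j ≠ i} Aᵢ Aⱼ Aᵢ =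
Aᵢ (1 - Aᵢ) Aᵢ = 0` is a sum of positive semidefinite matrices, so each `Aᵢ Aⱼ Aᵢ` vanishes, and
positivity of `Aⱼ` upgrades this to `Aⱼ Aᵢ = 0`.
-/

open Matrix
open scoped ComplexOrder

namespace Matrix

variable {m n ι K 𝕜 : Type*} [Fintype n]

theorem rank_sum_le [Field K] (s : Finset ι) (A : ι → Matrix m n K) :
    (∑ i ∈ s, A i).rank ≤ ∑ i ∈ s, (A i).rank := by
  have hcast (B : Matrix m n K) : (B.rank : Cardinal) = B.mulVecLin.rank :=
    Module.finrank_eq_rank _ _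
  have h := LinearMap.rank_finsetSum_le s fun i => (A i).mulVecLin
  rw [← map_sum (mulVecBilin K K), ← hcast] at h
  simp_rw [← hcast] at h
  exact_mod_cast h

theorem mul_self_eq_of_rank_add_rank_one_sub_le [Field K] [DecidableEq n] {A : Matrix n n K}
    (h : A.rank + (1 - A).rank ≤ Fintype.card n) : A * A = A := by
  set p := LinearMap.range A.mulVecLin
  set q := LinearMap.range (1 - A).mulVecLin
  have hsup : p ⊔ q = ⊤ := by
    refine Submodule.eq_top_iff'.2 fun x => ?_
    have hx : A *ᵥ x + (1 - A) *ᵥ x = x := by rw [← add_mulVec, add_sub_cancel, one_mulVec]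
    exact hx ▸ Submodule.add_mem_sup ⟨x, rfl⟩ ⟨x, rfl⟩
  have hinf : p ⊓ q = ⊥ := by
    have hdim := Submodule.finrank_sup_add_finrank_inf_eq p q
    rw [hsup, finrank_top, Module.finrank_fintype_fun_eq_card] at hdim
    change Module.finrank K p + Module.finrank K q ≤ _ at h
    exact Submodule.finrank_eq_zero.mp (by omega)
  refine (sub_eq_zero.1 (ext_iff_mulVec.2 fun x => ?_)).symm
  have hp : (A - A * A) *ᵥ x ∈ p :=
    ⟨(1 - A) *ᵥ x, by rw [mulVecLin_apply, mulVec_mulVec, mul_sub, mul_one]⟩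
  have hq : (A - A * A) *ᵥ x ∈ q :=
    ⟨A *ᵥ x, by rw [mulVecLin_apply, mulVec_mulVec, sub_mul, one_mul]⟩
  simpa [hinf] using Submodule.mem_inf.2 ⟨hp, hq⟩

theorem mul_self_eq_of_sum_eq_one_of_sum_rank_eq [Fintype ι] [Field K] [DecidableEq n]
    {A : ι → Matrix n n K} (hsum : ∑ i, A i = 1) (hrank : ∑ i, (A i).rank = Fintype.card n)
    (i : ι) : A i * A i = A i := by
  classical
  refine mul_self_eq_of_rank_add_rank_one_sub_le ?_
  have hcompl : 1 - A i = ∑ l ∈ Finset.univ.erase i, A l := by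
    rw [← hsum, Finset.sum_erase_eq_sub (Finset.mem_univ i)]
  have hle := rank_sum_le (Finset.univ.erase i) A
  have hsplit := Finset.add_sum_erase Finset.univ (fun l => (A l).rank) (Finset.mem_univ i)
  rw [hcompl]
  omega

theorem PosSemidef.mul_eq_zero_of_conjTranspose_mul_mul_eq_zero [Fintype m] [RCLike 𝕜]
    {B : Matrix n n 𝕜} (hB : B.PosSemidef) {A : Matrix n m 𝕜} (h : Aᴴ * B * A = 0) : B * A = 0 := by
  refine ext_iff_mulVec.2 fun x => ?_
  have hx : star (A *ᵥ x) ⬝ᵥ B *ᵥ (A *ᵥ x) = 0 := by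
    rw [star_mulVec, ← dotProduct_mulVec, mulVec_mulVec, mulVec_mulVec, h, zero_mulVec,
      dotProduct_zero]
  simpa [mulVec_mulVec] using (hB.dotProduct_mulVec_zero_iff _).1 hx

open scoped MatrixOrder in
theorem mul_eq_zero_of_sum_eq_one_of_mul_self_eq [Fintype ι] [RCLike 𝕜] [DecidableEq n]
    {A : ι → Matrix n n 𝕜} (hpsd : ∀ i, (A i).PosSemidef) (hsum : ∑ i, A i = 1) {i j : ι}
    (hi : A i * A i = A i) (hij : i ≠ j) : A j * A i = 0 := by
  classical
  have hsandwich : ∀ l, (A i * A l * A i).PosSemidef := fun l => by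
    simpa [(hpsd i).isHermitian.eq] using (hpsd l).conjTranspose_mul_mul_same (A i)
  have hzero : ∑ l ∈ Finset.univ.erase i, A i * A l * A i = 0 := by
    rw [← Finset.sum_mul, ← Finset.mul_sum, Finset.sum_erase_eq_sub (Finset.mem_univ i), hsum,
      mul_sub, mul_one, hi, sub_self, zero_mul]
  have hj : A i * A j * A i = 0 :=
    (Finset.sum_eq_zero_iff_of_nonneg (fun l _ => (hsandwich l).nonneg)).1 hzero j
      (Finset.mem_erase.2 ⟨hij.symm, Finset.mem_univ j⟩)
  exact (hpsd j).mul_eq_zero_of_conjTranspose_mul_mul_eq_zero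
    (by rwa [(hpsd i).isHermitian.eq])

end Matrix

theorem cochran_matrix_core
    (n k : ℕ) (A : Fin k → Matrix (Fin n) (Fin n) ℝ)
    (hpsd : ∀ i, (A i).PosSemidef)
    (hsum : ∑ i, A i = (1 : Matrix (Fin n) (Fin n) ℝ))
    (hrank : ∑ i, (A i).rank = n) :
    (∀ i, A i * A i = A i) ∧ (∀ i j, i ≠ j → A i * A j = 0) := by
  have hidem : ∀ i, A i * A i = A i :=
    mul_self_eq_of_sum_eq_one_of_sum_rank_eq hsum (hrank.trans (Fintype.card_fin n).symm)
  exact ⟨hidem, fun i j hij =>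
    mul_eq_zero_of_sum_eq_one_of_mul_self_eq hpsd hsum (hidem j) hij.symm⟩
end

section
/- Let X ∈ ℝ^{n×p} have full column rank and Σ be symmetric positive definite. The OLS estimator (XᵀX)⁻¹Xᵀy equals the GLS estimator (XᵀΣ⁻¹X)⁻¹XᵀΣ⁻¹y for all y ∈ ℝⁿ if and only if the column space of Σ⁻¹X equals the column space of X. -/
open Matrix

/-!
Both estimators are linear in `y`, so the claim is the matrix identity `A⁻¹Xᵀ = B⁻¹XᵀW` with
`A = XᵀX`, `B = XᵀWX` and `W = Σ⁻¹`. Multiplying by `B` and transposing (`W` is symmetric) turns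
it into `WX = X(A⁻¹B)`. As `A⁻¹B` is invertible, this forces the column spaces of `WX` and `X` to
agree; conversely, once the columns of `WX` lie in the column space of `X`, the projection
`XA⁻¹Xᵀ` fixes `WX`, which is that identity.
-/

namespace Matrix

variable {m n k R : Type*} [Fintype n]

theorem mulVec_injective_of_rank_eq_card [Field R] {X : Matrix m n R}
    (hX : X.rank = Fintype.card n) : Function.Injective X.mulVec := by
  have h := LinearMap.finrank_range_add_finrank_ker X.mulVecLin
  rw [← rank, hX, Module.finrank_fintype_fun_eq_card, Nat.add_eq_left,
    Submodule.finrank_eq_zero, LinearMap.ker_eq_bot] at h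
  exact h

theorem exists_eq_mul_of_range_mulVecLin_le [CommSemiring R] [Fintype k] [DecidableEq k]
    {X : Matrix m n R} {Y : Matrix m k R}
    (h : LinearMap.range Y.mulVecLin ≤ LinearMap.range X.mulVecLin) :
    ∃ C : Matrix n k R, Y = X * C := by
  choose c hc using fun j => h ⟨Pi.single j 1, rfl⟩
  refine ⟨(of c)ᵀ, ext fun i j => ?_⟩
  rw [← col_apply Y j i, ← mulVec_single_one, ← mulVecLin_apply, ← hc j]
  rfl

theorem range_mulVecLin_mul_of_isUnit [CommRing R] [DecidableEq n] (X : Matrix m n R)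
    {M : Matrix n n R} (hM : IsUnit M) :
    LinearMap.range (X * M).mulVecLin = LinearMap.range X.mulVecLin := by
  rw [mulVecLin_mul]
  exact LinearMap.range_comp_of_range_eq_top _
    (LinearMap.range_eq_top.mpr (mulVec_surjective_iff_isUnit.mpr hM))

variable [Fintype m] [DecidableEq n]

theorem mul_inv_gram_mul_eq_of_range_le [CommRing R] [Fintype k] [DecidableEq k]
    {X : Matrix m n R} {Y : Matrix m k R} (hX : IsUnit (Xᵀ * X).det)
    (h : LinearMap.range Y.mulVecLin ≤ LinearMap.range X.mulVecLin) :
    X * ((Xᵀ * X)⁻¹ * (Xᵀ * Y)) = Y := by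
  obtain ⟨C, rfl⟩ := exists_eq_mul_of_range_mulVecLin_le h
  rw [← Matrix.mul_assoc Xᵀ, ← Matrix.mul_assoc _ (Xᵀ * X), nonsing_inv_mul _ hX, Matrix.one_mul]

theorem inv_gram_mul_transpose_eq_iff [CommRing R] {X : Matrix m n R} {W : Matrix m m R}
    (hW : W.IsSymm) (hB : IsUnit (Xᵀ * W * X).det) :
    (Xᵀ * X)⁻¹ * Xᵀ = (Xᵀ * W * X)⁻¹ * (Xᵀ * W) ↔
      W * X = X * ((Xᵀ * X)⁻¹ * (Xᵀ * W * X)) := by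
  let := invertibleOfIsUnitDet _ hB
  calc _ ↔ Xᵀ * W = (Xᵀ * W * X) * ((Xᵀ * X)⁻¹ * Xᵀ) := by
        rw [eq_comm, inv_mul_eq_iff_eq_mul_of_invertible]
    _ ↔ _ := by
        rw [← transpose_inj]
        simp only [transpose_mul, transpose_transpose, transpose_nonsing_inv, hW.eq,
          Matrix.mul_assoc]

theorem mul_eq_mul_inv_gram_iff_range_eq [CommRing R] {X : Matrix m n R} {W : Matrix m m R}
    (hA : IsUnit (Xᵀ * X).det) (hB : IsUnit (Xᵀ * W * X).det) :
    W * X = X * ((Xᵀ * X)⁻¹ * (Xᵀ * W * X)) ↔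
      LinearMap.range (W * X).mulVecLin = LinearMap.range X.mulVecLin := by
  refine ⟨fun h => ?_, fun h => ?_⟩
  · rw [h, range_mulVecLin_mul_of_isUnit]
    rw [isUnit_iff_isUnit_det, det_mul]
    exact (isUnit_nonsing_inv_det _ hA).mul hB
  · rw [Matrix.mul_assoc Xᵀ, mul_inv_gram_mul_eq_of_range_le hA h.le]

theorem isUnit_det_transpose_mul_mul {X : Matrix m n ℝ} {W : Matrix m m ℝ} (hW : W.PosDef)
    (hX : Function.Injective X.mulVec) : IsUnit (Xᵀ * W * X).det :=
  (isUnit_iff_isUnit_det _).mp (hW.conjTranspose_mul_mul_same hX).isUnit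

end Matrix

theorem ols_eq_gls_iff
    (n p : ℕ) (X : Matrix (Fin n) (Fin p) ℝ) (hrank : X.rank = p)
    (S : Matrix (Fin n) (Fin n) ℝ) (hS : S.PosDef) :
    (∀ y : Fin n → ℝ,
      (Xᵀ * X)⁻¹ *ᵥ (Xᵀ *ᵥ y) = (Xᵀ * S⁻¹ * X)⁻¹ *ᵥ ((Xᵀ * S⁻¹) *ᵥ y)) ↔
    LinearMap.range (S⁻¹ * X).mulVecLin = LinearMap.range X.mulVecLin := by
  have hX : Function.Injective X.mulVec :=
    mulVec_injective_of_rank_eq_card (by rwa [Fintype.card_fin])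
  have hA : IsUnit (Xᵀ * X).det := by
    simpa using isUnit_det_transpose_mul_mul PosDef.one hX
  have hB : IsUnit (Xᵀ * S⁻¹ * X).det := isUnit_det_transpose_mul_mul hS.inv hX
  have hW : (S⁻¹).IsSymm := isHermitian_iff_isSymm.mp hS.inv.isHermitian
  simp only [mulVec_mulVec, ← ext_iff_mulVec]
  rw [inv_gram_mul_transpose_eq_iff hW hB, mul_eq_mul_inv_gram_iff_range_eq hA hB]
end
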